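/- arXiv:2501.19122 — 3 statements merged into one kernel-verified Lean document; each statement's English description precedes it below -/
import Mathlib

section
/- Let a and b be nonnegative integers with N = a + b ≥ 1, and let ξ be a random variable with the Beta(a+1, b+1) distribution on [0,1]. Set the empirical mean μ̂ = a/N. Then for every ε ≥ 0, the probability that |ξ − μ̂|² > ε is at most 2·exp(−2εN). -/
open MeasureTheory ProbabilityTheory
open Real Finset

/-- Hoeffding's lemma for a Bernoulli variable: `1 - p + p * exp λ ≤ exp (p*λ + λ²/8)`. -/
lemma bern_mgf_bound (p : ℝ) (hp0 : 0 ≤ p) (hp1 : p ≤ 1) (l : ℝ) :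
    1 - p + p * Real.exp l ≤ Real.exp (p * l + l ^ 2 / 8) := by
  set D : ℝ → ℝ := fun x => 1 - p + p * Real.exp x with hD
  have hDpos : ∀ x, 0 < D x := by
    intro x
    have := Real.exp_pos x
    rcases eq_or_lt_of_le hp0 with h | h
    · simp [hD, ← h]
    · have : 0 < p * Real.exp x := by positivity
      simp only [hD]; linarith
  set f : ℝ → ℝ := fun x => p * x + x ^ 2 / 8 - Real.log (D x) with hf
  set f' : ℝ → ℝ := fun x => p + x / 4 - p * Real.exp x / D x with hf'
  set f'' : ℝ → ℝ := fun x => 1 / 4 - p * Real.exp x * (1 - p) / (D x) ^ 2 with hf''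
  have hder : ∀ x, HasDerivAt f (f' x) x := by
    intro x
    have hDd : HasDerivAt D (p * Real.exp x) x := by
      exact ((Real.hasDerivAt_exp x).const_mul p).const_add (1 - p)
    have hlog : HasDerivAt (fun x => Real.log (D x)) (p * Real.exp x / D x) x :=
      hDd.log (hDpos x).ne'
    have h1 : HasDerivAt (fun x : ℝ => p * x + x ^ 2 / 8) (p + 2 * x / 8) x := by
      exact (((hasDerivAt_id x).const_mul p).add ((hasDerivAt_pow 2 x).div_const 8)).congr_deriv (by norm_num <;> ring)
    have := h1.sub hlog
    refine this.congr_deriv (Eq.symm ?_)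
    simp only [hf']; ring
  have hder' : ∀ x, HasDerivAt f' (f'' x) x := by
    intro x
    have hDd : HasDerivAt D (p * Real.exp x) x := by
      exact ((Real.hasDerivAt_exp x).const_mul p).const_add (1 - p)
    have hnum : HasDerivAt (fun x => p * Real.exp x) (p * Real.exp x) x :=
      (Real.hasDerivAt_exp x).const_mul p
    have hq : HasDerivAt (fun x => p * Real.exp x / D x)
        ((p * Real.exp x * D x - p * Real.exp x * (p * Real.exp x)) / (D x) ^ 2) x :=
      hnum.div hDd (hDpos x).ne'
    have h1 : HasDerivAt (fun x : ℝ => p + x / 4) (1 / 4) x := by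
      simpa using ((hasDerivAt_id x).div_const 4).const_add p
    have := h1.sub hq
    refine this.congr_deriv (Eq.symm ?_)
    simp only [hf'', hD]
    ring
  have hf''nonneg : ∀ x, 0 ≤ f'' x := by
    intro x
    have hexp := Real.exp_pos x
    have hsq : 0 ≤ (1 - p - p * Real.exp x) ^ 2 := sq_nonneg _
    have h4 : 4 * (p * Real.exp x * (1 - p)) ≤ (D x) ^ 2 := by
      simp only [hD]; nlinarith
    have hD2 : 0 < (D x) ^ 2 := pow_pos (hDpos x) 2
    simp only [hf'']
    rw [sub_nonneg, div_le_iff₀ hD2]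
    linarith
  have hmono : Monotone f' := monotone_of_hasDerivAt_nonneg hder' hf''nonneg
  have hf'0 : f' 0 = 0 := by simp [hf', hD]
  have hf0 : f 0 = 0 := by simp [hf, hD]
  have hnn : ∀ x, 0 ≤ f x := by
    intro x
    rcases le_total 0 x with hx | hx
    · have : MonotoneOn f (Set.Ici 0) := by
        apply monotoneOn_of_hasDerivWithinAt_nonneg (convex_Ici 0)
          (fun y _ => (hder y).continuousAt.continuousWithinAt)
          (fun y _ => (hder y).hasDerivWithinAt)
        intro y hy
        rw [interior_Ici] at hy
        calc (0:ℝ) = f' 0 := hf'0.symm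
        _ ≤ f' y := hmono (le_of_lt hy)
      have := this (Set.self_mem_Ici) (Set.mem_Ici.mpr hx) hx
      linarith [hf0 ▸ this]
    · have : AntitoneOn f (Set.Iic 0) := by
        apply antitoneOn_of_hasDerivWithinAt_nonpos (convex_Iic 0)
          (fun y _ => (hder y).continuousAt.continuousWithinAt)
          (fun y _ => (hder y).hasDerivWithinAt)
        intro y hy
        rw [interior_Iic] at hy
        calc f' y ≤ f' 0 := hmono (le_of_lt hy)
        _ = 0 := hf'0
      have := this (Set.mem_Iic.mpr hx) (Set.self_mem_Iic) hx
      linarith [hf0 ▸ this]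
  have hx := hnn l
  have : Real.log (D l) ≤ p * l + l ^ 2 / 8 := by simp only [hf] at hx; linarith
  calc D l = Real.exp (Real.log (D l)) := (Real.exp_log (hDpos l)).symm
  _ ≤ Real.exp (p * l + l ^ 2 / 8) := Real.exp_le_exp.mpr this

/-- Chernoff–Hoeffding bound for the lower binomial tail. -/
lemma binom_lower_tail (n a : ℕ) (hn : 1 ≤ n) (ha : a ≤ n) (y : ℝ)
    (hy0 : 0 ≤ y) (hy1 : y ≤ 1) (hgap : (a : ℝ) ≤ n * y) :
    ∑ j ∈ Finset.range (a + 1), (n.choose j : ℝ) * y ^ j * (1 - y) ^ (n - j) ≤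
      Real.exp (-2 * (n * y - a) ^ 2 / n) := by
  have hnR : (0:ℝ) < n := by exact_mod_cast hn
  set l : ℝ := 4 * (n * y - a) / n with hl
  have hl0 : 0 ≤ l := by
    apply div_nonneg _ hnR.le; linarith
  have step1 : ∀ j ∈ Finset.range (a + 1),
      (n.choose j : ℝ) * y ^ j * (1 - y) ^ (n - j) ≤
      (n.choose j : ℝ) * (y * Real.exp (-l)) ^ j * (1 - y) ^ (n - j) * Real.exp (l * a) := by
    intro j hj
    have hj' : j ≤ a := Nat.lt_succ_iff.mp (Finset.mem_range.mp hj)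
    have h1 : (1:ℝ) ≤ Real.exp (-(l * j)) * Real.exp (l * a) := by
      rw [← Real.exp_add]
      nth_rewrite 1 [← Real.exp_zero]
      apply Real.exp_le_exp.mpr
      have : (j:ℝ) ≤ a := by exact_mod_cast hj'
      nlinarith
    have h1y : (0:ℝ) ≤ 1 - y := by linarith
    have hterm : (0:ℝ) ≤ (n.choose j : ℝ) * y ^ j * (1 - y) ^ (n - j) :=
      mul_nonneg (mul_nonneg (by positivity) (by positivity)) (pow_nonneg h1y _)
    calc (n.choose j : ℝ) * y ^ j * (1 - y) ^ (n - j)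
        ≤ ((n.choose j : ℝ) * y ^ j * (1 - y) ^ (n - j)) * (Real.exp (-(l * j)) * Real.exp (l * a)) := by
          nlinarith
      _ = (n.choose j : ℝ) * (y * Real.exp (-l)) ^ j * (1 - y) ^ (n - j) * Real.exp (l * a) := by
          rw [mul_pow, ← Real.exp_nat_mul]
          ring_nf
  have step2 : ∑ j ∈ Finset.range (a + 1), (n.choose j : ℝ) * y ^ j * (1 - y) ^ (n - j) ≤
      ∑ j ∈ Finset.range (n + 1),
        (n.choose j : ℝ) * (y * Real.exp (-l)) ^ j * (1 - y) ^ (n - j) * Real.exp (l * a) := by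
    calc ∑ j ∈ Finset.range (a + 1), (n.choose j : ℝ) * y ^ j * (1 - y) ^ (n - j)
        ≤ ∑ j ∈ Finset.range (a + 1),
            (n.choose j : ℝ) * (y * Real.exp (-l)) ^ j * (1 - y) ^ (n - j) * Real.exp (l * a) :=
          Finset.sum_le_sum step1
      _ ≤ _ := by
          apply Finset.sum_le_sum_of_subset_of_nonneg
          · exact Finset.range_subset_range.mpr (by omega)
          · intro j _ _
            have h1y : (0:ℝ) ≤ 1 - y := by linarith
            have h2 : (0:ℝ) ≤ y * Real.exp (-l) := by positivity
            exact mul_nonneg (mul_nonneg (mul_nonneg (by positivity) (pow_nonneg h2 _))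
              (pow_nonneg h1y _)) (Real.exp_pos _).le
  have hbinom : ∑ j ∈ Finset.range (n + 1),
      (n.choose j : ℝ) * (y * Real.exp (-l)) ^ j * (1 - y) ^ (n - j)
      = (y * Real.exp (-l) + (1 - y)) ^ n := by
    rw [add_pow]
    apply Finset.sum_congr rfl
    intro j _; ring
  have hbase : y * Real.exp (-l) + (1 - y) ≤ Real.exp (y * (-l) + (-l) ^ 2 / 8) := by
    have := bern_mgf_bound y hy0 hy1 (-l)
    linarith
  have hbase0 : 0 ≤ y * Real.exp (-l) + (1 - y) := by
    have h2 : (0:ℝ) ≤ y * Real.exp (-l) := by positivity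
    linarith
  have step3 : (y * Real.exp (-l) + (1 - y)) ^ n ≤ Real.exp (n * (y * (-l) + (-l) ^ 2 / 8)) := by
    rw [Real.exp_nat_mul]
    exact pow_le_pow_left₀ hbase0 hbase n
  have final : Real.exp (n * (y * (-l) + (-l) ^ 2 / 8)) * Real.exp (l * a)
      = Real.exp (-2 * (n * y - a) ^ 2 / n) := by
    rw [← Real.exp_add]
    congr 1
    rw [hl]
    field_simp
    ring
  calc ∑ j ∈ Finset.range (a + 1), (n.choose j : ℝ) * y ^ j * (1 - y) ^ (n - j)
      ≤ ∑ j ∈ Finset.range (n + 1),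
        (n.choose j : ℝ) * (y * Real.exp (-l)) ^ j * (1 - y) ^ (n - j) * Real.exp (l * a) := step2
    _ = (∑ j ∈ Finset.range (n + 1),
        (n.choose j : ℝ) * (y * Real.exp (-l)) ^ j * (1 - y) ^ (n - j)) * Real.exp (l * a) := by
        rw [Finset.sum_mul]
    _ = (y * Real.exp (-l) + (1 - y)) ^ n * Real.exp (l * a) := by rw [hbinom]
    _ ≤ Real.exp (n * (y * (-l) + (-l) ^ 2 / 8)) * Real.exp (l * a) := by
        apply mul_le_mul_of_nonneg_right step3 (Real.exp_pos _).le
    _ = _ := final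

/-- Derivative of a single Bernstein-type term. -/
lemma hasDerivAt_term (c : ℝ) (j m : ℕ) (y : ℝ) :
    HasDerivAt (fun y : ℝ => c * y ^ j * (1 - y) ^ m)
      (c * (j * y ^ (j - 1) * (1 - y) ^ m) - c * (y ^ j * (m * (1 - y) ^ (m - 1)))) y := by
  have h1 : HasDerivAt (fun y : ℝ => y ^ j) (j * y ^ (j - 1)) y := hasDerivAt_pow j y
  have h2 : HasDerivAt (fun y : ℝ => (1 - y) ^ m) (-(m * (1 - y) ^ (m - 1))) y := by
    have hin : HasDerivAt (fun y : ℝ => 1 - y) (-1) y := by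
      exact (hasDerivAt_id y).const_sub 1
    have := (hasDerivAt_pow m (1 - y)).comp y hin
    exact this.congr_deriv (by ring)
  have := ((h1.const_mul c).mul h2)
  refine this.congr_deriv (Eq.symm ?_)
  ring

/-- Derivative of the lower binomial CDF in the parameter: telescoping, by induction. -/
lemma hasDerivAt_binomCDF (n : ℕ) : ∀ a : ℕ, a < n → ∀ y : ℝ,
    HasDerivAt (fun y : ℝ => ∑ j ∈ Finset.range (a + 1),
        (n.choose j : ℝ) * y ^ j * (1 - y) ^ (n - j))
      (-(n * ((n - 1).choose a : ℝ) * y ^ a * (1 - y) ^ (n - 1 - a))) y := by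
  intro a
  induction a with
  | zero =>
    intro hn y
    have h2 : (fun y : ℝ => ∑ j ∈ Finset.range (0+1),
        (n.choose j : ℝ) * y ^ j * (1 - y) ^ (n - j)) = fun y : ℝ => 1 * y ^ 0 * (1 - y) ^ n := by
      funext y; simp
    rw [h2]
    convert hasDerivAt_term 1 0 n y using 1
    simp
  | succ a ih =>
    intro hn y
    have ha : a < n := by omega
    have hsum : (fun y : ℝ => ∑ j ∈ Finset.range (a + 1 + 1),
        (n.choose j : ℝ) * y ^ j * (1 - y) ^ (n - j))
        = fun y : ℝ => (∑ j ∈ Finset.range (a + 1),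
        (n.choose j : ℝ) * y ^ j * (1 - y) ^ (n - j))
          + (n.choose (a+1) : ℝ) * y ^ (a+1) * (1 - y) ^ (n - (a+1)) := by
      funext y; rw [Finset.sum_range_succ]
    rw [hsum]
    have hterm := hasDerivAt_term ((n.choose (a+1) : ℝ)) (a+1) (n - (a+1)) y
    have := (ih ha y).add hterm
    refine this.congr_deriv (Eq.symm ?_)
    -- identity juggling
    have e1 : (n.choose (a+1) : ℝ) * ((a:ℝ)+1) = (n:ℝ) * ((n-1).choose a : ℝ) := by
      have h0 := Nat.add_one_mul_choose_eq (n-1) a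
      have hn1 : n - 1 + 1 = n := by omega
      simp only [Nat.succ_eq_add_one, hn1] at h0
      have : (n.choose (a+1) * (a+1) : ℕ) = (n * (n-1).choose a : ℕ) := h0.symm
      exact_mod_cast by push_cast [← this]; ring
    have e2 : (n.choose (a+1) : ℝ) * ((n:ℝ) - ((a:ℝ)+1)) = (n:ℝ) * ((n-1).choose (a+1) : ℝ) := by
      have h1 := Nat.add_one_mul_choose_eq (n-1) (a+1)
      have hn1 : n - 1 + 1 = n := by omega
      simp only [Nat.succ_eq_add_one, hn1] at h1
      -- n * (n-1).choose (a+1) = n.choose (a+2) * (a+2)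
      have h2 := Nat.choose_succ_right_eq n (a+1)
      -- n.choose (a+2) * (a+2) = n.choose (a+1) * (n - (a+1))
      have hcast : ((n - (a+1) : ℕ) : ℝ) = (n:ℝ) - ((a:ℝ)+1) := by
        push_cast [Nat.cast_sub (by omega : a+1 ≤ n)]; ring
      calc (n.choose (a+1) : ℝ) * ((n:ℝ) - ((a:ℝ)+1))
          = ((n.choose (a+1) * (n - (a+1)) : ℕ) : ℝ) := by push_cast [hcast]; ring
        _ = ((n.choose (a+1+1) * (a+1+1) : ℕ) : ℝ) := by rw [← h2]
        _ = ((n * (n-1).choose (a+1) : ℕ) : ℝ) := by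
              rw [(by omega : a+1+1 = a+2), (by push_cast; ring_nf : (a+1+1 : ℕ) = a+2)] at h1 ⊢
              rw [← h1]
        _ = _ := by push_cast; ring
    have hexp1 : n - 1 - a = n - (a+1) := by omega
    have hexp2 : n - (a+1) - 1 = n - 1 - (a+1) := by omega
    have hya : y ^ (a + 1 - 1) = y ^ a := by norm_num
    rw [hya, hexp1, hexp2]
    have hc : ((n - (a+1) : ℕ) : ℝ) = (n:ℝ) - ((a:ℝ)+1) := by
      push_cast [Nat.cast_sub (by omega : a+1 ≤ n)]; ring
    rw [hc]
    push_cast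
    linear_combination (y^(a+1) * (1-y)^(n-1-(a+1))) * e2 - ((1-y)^(n-(a+1)) * y^a) * e1

noncomputable def Scdf (n a : ℕ) (y : ℝ) : ℝ :=
  ∑ j ∈ Finset.range (a + 1), (n.choose j : ℝ) * y ^ j * (1 - y) ^ (n - j)

lemma Scdf_one (n a : ℕ) (ha : a < n) : Scdf n a 1 = 0 := by
  unfold Scdf
  apply Finset.sum_eq_zero
  intro j hj
  have hj' : j ≤ a := Nat.lt_succ_iff.mp (Finset.mem_range.mp hj)
  have h : (1:ℝ) - 1 = 0 := by ring
  rw [h, zero_pow (by omega : n - j ≠ 0)]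
  ring

lemma Scdf_zero (n a : ℕ) : Scdf n a 0 = 1 := by
  unfold Scdf
  rw [Finset.sum_eq_single 0]
  · simp
  · intro j _ hj
    rw [zero_pow hj]; ring
  · simp

lemma tail_integral_eq (a b : ℕ) (y : ℝ) :
    ∫ x in y..1, x ^ a * (1 - x) ^ b =
      Scdf (a + b + 1) a y / (((a + b : ℕ) : ℝ) + 1) / (((a + b).choose a : ℝ)) := by
  set n := a + b + 1 with hn
  have ha : a < n := by omega
  have hCpos : (0:ℝ) < ((a + b).choose a : ℝ) := by
    exact_mod_cast Nat.choose_pos (by omega)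
  have hftc : ∫ x in y..1, -((n:ℝ) * ((n - 1).choose a : ℝ) * x ^ a * (1 - x) ^ (n - 1 - a))
      = Scdf n a 1 - Scdf n a y := by
    apply intervalIntegral.integral_eq_sub_of_hasDerivAt
    · intro x _
      exact hasDerivAt_binomCDF n a ha x
    · apply Continuous.intervalIntegrable
      continuity
  rw [Scdf_one n a ha] at hftc
  have hb : n - 1 - a = b := by omega
  have hb' : n - 1 = a + b := by omega
  rw [hb, hb'] at hftc
  have h2 : ∫ x in y..1, -((n:ℝ) * ((a + b).choose a : ℝ) * x ^ a * (1 - x) ^ b)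
      = -((n:ℝ) * ((a + b).choose a : ℝ)) * ∫ x in y..1, x ^ a * (1 - x) ^ b := by
    rw [← intervalIntegral.integral_const_mul]
    congr 1; funext x; ring
  rw [h2] at hftc
  have hnR : ((n:ℕ):ℝ) = ((a + b : ℕ) : ℝ) + 1 := by rw [hn]; push_cast; ring
  have hnpos : (0:ℝ) < ((a + b : ℕ) : ℝ) + 1 := by positivity
  rw [hnR] at hftc
  push_cast at hftc ⊢
  field_simp
  linear_combination -hftc

lemma full_integral_eq (a b : ℕ) :
    ∫ x in (0:ℝ)..1, x ^ a * (1 - x) ^ b =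
      1 / (((a + b : ℕ) : ℝ) + 1) / (((a + b).choose a : ℝ)) := by
  rw [tail_integral_eq a b 0, Scdf_zero]

lemma full_integral_pos (a b : ℕ) : 0 < ∫ x in (0:ℝ)..1, x ^ a * (1 - x) ^ b := by
  rw [full_integral_eq]
  have hCpos : (0:ℝ) < ((a + b).choose a : ℝ) := by
    exact_mod_cast Nat.choose_pos (by omega)
  positivity

/-- Upper tail of the (unnormalized) Beta density. -/
lemma beta_upper_tail (a b : ℕ) (hN : 1 ≤ a + b) (t : ℝ) (ht : 0 ≤ t)
    (hy1 : (a : ℝ) / ((a + b : ℕ) : ℝ) + t ≤ 1) :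
    ∫ x in ((a : ℝ) / ((a + b : ℕ) : ℝ) + t)..1, x ^ a * (1 - x) ^ b ≤
      Real.exp (-2 * ((a + b : ℕ) : ℝ) * t ^ 2) * ∫ x in (0:ℝ)..1, x ^ a * (1 - x) ^ b := by
  set N := a + b with hNdef
  set y : ℝ := (a : ℝ) / ((N : ℕ) : ℝ) + t with hy
  have hNR : (0:ℝ) < ((N:ℕ):ℝ) := by exact_mod_cast hN
  have hy0 : 0 ≤ y := by
    have h1 : (0:ℝ) ≤ (a:ℝ) / ((N:ℕ):ℝ) := by positivity
    simp only [hy]; linarith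
  have hkey : (((N + 1 : ℕ)):ℝ) * y = (a:ℝ) + (a:ℝ)/((N:ℕ):ℝ) + (((N:ℕ):ℝ)+1)*t := by
    rw [hy]; push_cast; field_simp
  have haN : (0:ℝ) ≤ (a:ℝ)/((N:ℕ):ℝ) := by positivity
  have hgap : (a : ℝ) ≤ ((N + 1 : ℕ):ℝ) * y := by
    rw [hkey]; nlinarith
  have htail := binom_lower_tail (N+1) a (by omega) (by omega) y hy0 hy1
    (by exact_mod_cast hgap)
  -- exponent comparison
  have hG : (((N:ℕ):ℝ)+1) * t ≤ ((N + 1 : ℕ):ℝ) * y - (a:ℝ) := by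
    rw [hkey]; push_cast; linarith
  have hGn : ((N + 1 : ℕ):ℝ) = ((N:ℕ):ℝ) + 1 := by push_cast; ring
  have hexp : Real.exp (-2 * (((N+1:ℕ):ℝ) * y - a) ^ 2 / ((N+1:ℕ):ℝ)) ≤
      Real.exp (-2 * ((N:ℕ):ℝ) * t ^ 2) := by
    apply Real.exp_le_exp.mpr
    rw [hGn]
    have hpos : (0:ℝ) < ((N:ℕ):ℝ) + 1 := by linarith
    rw [div_le_iff₀ hpos]
    have hsq : ((((N:ℕ):ℝ)+1) * t) ^ 2 ≤ ((((N:ℕ):ℝ) + 1) * y - (a:ℝ)) ^ 2 := by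
      have h0 : (0:ℝ) ≤ (((N:ℕ):ℝ)+1) * t := by positivity
      have h1 := hG
      rw [hGn] at h1
      nlinarith
    nlinarith [sq_nonneg t]
  have hS : Scdf (N+1) a y ≤ Real.exp (-2 * ((N:ℕ):ℝ) * t ^ 2) := by
    unfold Scdf
    exact le_trans htail hexp
  rw [tail_integral_eq a b y, full_integral_eq a b]
  have hCpos : (0:ℝ) < ((a + b).choose a : ℝ) := by
    exact_mod_cast Nat.choose_pos (by omega)
  have hnpos : (0:ℝ) < ((a + b : ℕ) : ℝ) + 1 := by positivity
  have hrhs : Real.exp (-2 * ((N:ℕ):ℝ) * t ^ 2) *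
      (1 / (((a + b : ℕ) : ℝ) + 1) / (((a + b).choose a : ℝ)))
      = Real.exp (-2 * ((N:ℕ):ℝ) * t ^ 2) / (((a + b : ℕ) : ℝ) + 1) /
        (((a + b).choose a : ℝ)) := by
    ring
  rw [hNdef] at hrhs ⊢
  rw [hrhs]
  gcongr

lemma flip_integral (a b : ℕ) (z w : ℝ) :
    ∫ x in z..w, x ^ a * (1 - x) ^ b = ∫ x in (1-w)..(1-z), x ^ b * (1 - x) ^ a := by
  have := intervalIntegral.integral_comp_sub_left (a := z) (b := w)
    (fun u : ℝ => u ^ b * (1 - u) ^ a) 1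
  rw [← this]
  congr 1
  funext x
  ring_nf

/-- Lower tail of the (unnormalized) Beta density. -/
lemma beta_lower_tail (a b : ℕ) (hN : 1 ≤ a + b) (t : ℝ) (ht : 0 ≤ t)
    (hz0 : 0 ≤ (a : ℝ) / ((a + b : ℕ) : ℝ) - t) :
    ∫ x in (0:ℝ)..((a : ℝ) / ((a + b : ℕ) : ℝ) - t), x ^ a * (1 - x) ^ b ≤
      Real.exp (-2 * ((a + b : ℕ) : ℝ) * t ^ 2) * ∫ x in (0:ℝ)..1, x ^ a * (1 - x) ^ b := by
  have hNR : (0:ℝ) < ((a + b : ℕ) : ℝ) := by exact_mod_cast hN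
  have hflip1 : (1:ℝ) - ((a : ℝ) / ((a + b : ℕ) : ℝ) - t)
      = (b : ℝ) / ((b + a : ℕ) : ℝ) + t := by
    have hba : ((b + a : ℕ) : ℝ) = ((a + b : ℕ) : ℝ) := by push_cast; ring
    rw [hba]
    have hne : ((a + b : ℕ) : ℝ) ≠ 0 := hNR.ne'
    have hcast : ((a + b : ℕ) : ℝ) = (a:ℝ) + (b:ℝ) := by push_cast; ring
    rw [hcast] at hne ⊢
    field_simp
    ring
  have h1 := flip_integral a b 0 ((a : ℝ) / ((a + b : ℕ) : ℝ) - t)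
  rw [hflip1] at h1
  norm_num at h1
  have h2 := flip_integral a b 0 1
  norm_num at h2
  have hsum : (a:ℝ)/((a + b : ℕ) : ℝ) + (b:ℝ)/((a + b : ℕ) : ℝ) = 1 := by
    rw [← add_div, div_eq_one_iff_eq hNR.ne']
    push_cast; ring
  have hub := beta_upper_tail b a (by omega) t ht
    (by rw [(by push_cast; ring : ((b + a : ℕ) : ℝ) = ((a + b : ℕ) : ℝ))]; linarith)
  push_cast at h1 h2 hub ⊢
  rw [h1, h2]
  have hcomm : -2*((b:ℝ)+(a:ℝ)) * t^2 = -2*((a:ℝ)+(b:ℝ))*t^2 := by ring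
  rw [hcomm] at hub
  exact hub

/-- The Beta(`a+1`, `b+1`) distribution on `[0,1]` for natural numbers `a, b`:
the measure on `ℝ` supported on `[0,1]` with density proportional to
`x ^ a * (1 - x) ^ b` (i.e. `x ^ (α−1) * (1−x) ^ (β−1)` with `α = a+1`, `β = b+1`). -/
noncomputable def betaPosterior (a b : ℕ) : Measure ℝ :=
  (volume.restrict (Set.Icc (0 : ℝ) 1)).withDensity fun x =>
    ENNReal.ofReal ((x ^ a * (1 - x) ^ b) / ∫ y in Set.Icc (0 : ℝ) 1, y ^ a * (1 - y) ^ b)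

/-- **Concentration of Beta posterior samples around the empirical mean**
(Lemma 6): if `ξ` has the Beta(`a+1`, `b+1`) distribution, `N = a + b ≥ 1`, and
`μ̂ = a / N`, then for every `ε ≥ 0`,
`P(|ξ − μ̂|² > ε) ≤ 2·exp(−2·ε·N)`. -/
theorem beta_posterior_concentration
    {Ω : Type*} [MeasurableSpace Ω] (P : Measure Ω) [IsProbabilityMeasure P]
    (a b : ℕ) (hN : 1 ≤ a + b)
    (ξ : Ω → ℝ) (hmeas : Measurable ξ)
    (hlaw : Measure.map ξ P = betaPosterior a b)
    (ε : ℝ) (hε : 0 ≤ ε) :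
    P {ω | |ξ ω - (a : ℝ) / (a + b)| ^ 2 > ε} ≤
      ENNReal.ofReal (2 * Real.exp (-2 * ε * (a + b))) := by
  classical
  set μhat : ℝ := (a : ℝ) / ((a : ℝ) + (b : ℝ)) with hmu
  have hcast : ((a + b : ℕ) : ℝ) = (a : ℝ) + (b : ℝ) := by push_cast; ring
  have hNR : (0:ℝ) < (a : ℝ) + (b : ℝ) := by
    rw [← hcast]; exact_mod_cast hN
  have hmu0 : 0 ≤ μhat := by positivity
  have hmu1 : μhat ≤ 1 := by
    rw [hmu, div_le_one hNR]
    have : (0:ℝ) ≤ (b:ℝ) := by positivity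
    linarith
  set t : ℝ := Real.sqrt ε with hts
  have ht : 0 ≤ t := Real.sqrt_nonneg ε
  have ht2 : t ^ 2 = ε := Real.sq_sqrt hε
  set I : ℝ := ∫ x in (0:ℝ)..1, x ^ a * (1 - x) ^ b with hIdef
  have hIpos : 0 < I := full_integral_pos a b
  have hInorm : ∫ y in Set.Icc (0:ℝ) 1, y ^ a * (1 - y) ^ b = I := by
    rw [hIdef, integral_Icc_eq_integral_Ioc, ← intervalIntegral.integral_of_le zero_le_one]
  set g : ℝ → ℝ := fun x => x ^ a * (1 - x) ^ b with hg
  set h : ℝ → ℝ := fun x => g x / I with hh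
  have hcont : Continuous h := by
    apply Continuous.div_const
    continuity
  set A : Set ℝ := {x : ℝ | ε < |x - μhat| ^ 2} with hA
  have hAmeas : MeasurableSet A := by
    have : Measurable fun x : ℝ => |x - μhat| ^ 2 := by measurability
    exact measurableSet_lt measurable_const this
  have hmap : P {ω | |ξ ω - (a : ℝ) / ((a:ℝ) + (b:ℝ))| ^ 2 > ε} = betaPosterior a b A := by
    rw [← hlaw, Measure.map_apply hmeas hAmeas]
    rfl
  -- express as lintegral over A ∩ [0,1]
  have hbp : betaPosterior a b A
      = ∫⁻ x in A ∩ Set.Icc (0:ℝ) 1, ENNReal.ofReal (h x) ∂volume := by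
    rw [betaPosterior, withDensity_apply _ hAmeas, Measure.restrict_restrict hAmeas]
    simp only [hInorm, hh, hg]
    rw [show (∫ y in Set.Icc (0:ℝ) 1, y ^ a * (1 - y) ^ b) = I from hInorm]
  -- tail sets
  have hsub : A ∩ Set.Icc (0:ℝ) 1 ⊆
      Set.Icc (μhat + t) 1 ∪ Set.Icc (0:ℝ) (μhat - t) := by
    rintro x ⟨hxA, hx0, hx1⟩
    have h1 : t < |x - μhat| := by
      have h2 : t ^ 2 < |x - μhat| ^ 2 := by rw [ht2]; exact hxA
      exact lt_of_pow_lt_pow_left₀ 2 (abs_nonneg _) h2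
    rcases lt_abs.mp h1 with h2 | h2
    · left; exact ⟨by linarith, hx1⟩
    · right; exact ⟨hx0, by linarith⟩
  -- bound each tail
  have hup : ∫⁻ x in Set.Icc (μhat + t) 1, ENNReal.ofReal (h x) ∂volume
      ≤ ENNReal.ofReal (Real.exp (-2 * ε * ((a:ℝ) + (b:ℝ)))) := by
    by_cases hy1 : μhat + t ≤ 1
    · have hnn : 0 ≤ᵐ[volume.restrict (Set.Icc (μhat + t) 1)] h := by
        apply ae_restrict_of_forall_mem measurableSet_Icc
        intro x hx
        have hx0 : 0 ≤ x := le_trans (by linarith) hx.1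
        have hx1 : x ≤ 1 := hx.2
        apply div_nonneg _ hIpos.le
        have : (0:ℝ) ≤ 1 - x := by linarith
        positivity
      rw [← ofReal_integral_eq_lintegral_ofReal (hcont.integrableOn_Icc) hnn]
      apply ENNReal.ofReal_le_ofReal
      have heq : ∫ x in Set.Icc (μhat + t) 1, h x
          = (∫ x in (μhat + t)..1, g x) / I := by
        rw [integral_Icc_eq_integral_Ioc, ← intervalIntegral.integral_of_le hy1]
        rw [intervalIntegral.integral_div]
      rw [heq]
      have hub := beta_upper_tail a b hN t ht (by rw [hcast]; exact hy1)
      rw [hcast] at hub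
      rw [div_le_iff₀ hIpos]
      calc ∫ x in (μhat + t)..1, g x ≤
          Real.exp (-2 * ((a:ℝ) + (b:ℝ)) * t ^ 2) * I := hub
        _ = Real.exp (-2 * ε * ((a:ℝ) + (b:ℝ))) * I := by rw [← ht2]; ring_nf
    · have hempty : Set.Icc (μhat + t) 1 = ∅ := Set.Icc_eq_empty (by linarith)
      rw [hempty]
      simp
  have hlo : ∫⁻ x in Set.Icc (0:ℝ) (μhat - t), ENNReal.ofReal (h x) ∂volume
      ≤ ENNReal.ofReal (Real.exp (-2 * ε * ((a:ℝ) + (b:ℝ)))) := by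
    by_cases hz0 : 0 ≤ μhat - t
    · have hnn : 0 ≤ᵐ[volume.restrict (Set.Icc (0:ℝ) (μhat - t))] h := by
        apply ae_restrict_of_forall_mem measurableSet_Icc
        intro x hx
        have hx0 : 0 ≤ x := hx.1
        have hx1 : x ≤ 1 := le_trans hx.2 (by linarith)
        apply div_nonneg _ hIpos.le
        have : (0:ℝ) ≤ 1 - x := by linarith
        positivity
      rw [← ofReal_integral_eq_lintegral_ofReal (hcont.integrableOn_Icc) hnn]
      apply ENNReal.ofReal_le_ofReal
      have heq : ∫ x in Set.Icc (0:ℝ) (μhat - t), h x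
          = (∫ x in (0:ℝ)..(μhat - t), g x) / I := by
        rw [integral_Icc_eq_integral_Ioc, ← intervalIntegral.integral_of_le hz0]
        rw [intervalIntegral.integral_div]
      rw [heq]
      have hlb := beta_lower_tail a b hN t ht (by rw [hcast]; exact hz0)
      rw [hcast] at hlb
      rw [div_le_iff₀ hIpos]
      calc ∫ x in (0:ℝ)..(μhat - t), g x ≤
          Real.exp (-2 * ((a:ℝ) + (b:ℝ)) * t ^ 2) * I := hlb
        _ = Real.exp (-2 * ε * ((a:ℝ) + (b:ℝ))) * I := by rw [← ht2]; ring_nf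
    · have hempty : Set.Icc (0:ℝ) (μhat - t) = ∅ := Set.Icc_eq_empty (by linarith)
      rw [hempty]
      simp
  -- combine
  calc P {ω | |ξ ω - (a : ℝ) / ((a:ℝ) + (b:ℝ))| ^ 2 > ε}
      = ∫⁻ x in A ∩ Set.Icc (0:ℝ) 1, ENNReal.ofReal (h x) ∂volume := by
        rw [hmap, hbp]
    _ ≤ ∫⁻ x in Set.Icc (μhat + t) 1 ∪ Set.Icc (0:ℝ) (μhat - t),
          ENNReal.ofReal (h x) ∂volume := lintegral_mono_set hsub
    _ ≤ (∫⁻ x in Set.Icc (μhat + t) 1, ENNReal.ofReal (h x) ∂volume)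
        + ∫⁻ x in Set.Icc (0:ℝ) (μhat - t), ENNReal.ofReal (h x) ∂volume :=
        lintegral_union_le _ _ _
    _ ≤ ENNReal.ofReal (Real.exp (-2 * ε * ((a:ℝ) + (b:ℝ))))
        + ENNReal.ofReal (Real.exp (-2 * ε * ((a:ℝ) + (b:ℝ)))) := add_le_add hup hlo
    _ = ENNReal.ofReal (2 * Real.exp (-2 * ε * ((a:ℝ) + (b:ℝ)))) := by
        rw [← ENNReal.ofReal_add (Real.exp_pos _).le (Real.exp_pos _).le]
        ring_nf
end

section
/- Let (Ω, P) be a probability space, let T and W be positive integers, and let Δ_max ≥ 0. For each t ∈ {1,...,T} and i ∈ {1,...,W}, let ξ_{t,i} and μ̂_{t,i} be real-valued random variables and let N_{t,i} be a random variable taking values in {1, ..., T−1}. For each t let Δ_t be a random variable with 0 ≤ Δ_t ≤ Δ_max. Assume that for all t, i and all τ ∈ {1,...,T−1}: P( N_{t,i} = τ and |ξ_{t,i} − μ̂_{t,i}|² > 3·log T/(2τ) ) ≤ P(N_{t,i} = τ)·2·exp(−3·log T). Define the event A_t = { ω : there exists i ∈ {1,...,W} with |ξ_{t,i}(ω) −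 μ̂_{t,i}(ω)|² > 3·log T/(2·N_{t,i}(ω)) }. Then E[ ∑_{t=1}^T 1_{A_t}·Δ_t ] ≤ 2·Δ_max·W. -/
open MeasureTheory ProbabilityTheory
open scoped ENNReal

/-- **Lemma 2**: the contribution of rounds where the Thompson-sample deviation
event `A t` occurs to the cumulative regret is at most `2·Δmax·W`. -/
theorem regret_contribution_event_A
    {Ω : Type*} [MeasurableSpace Ω] (P : Measure Ω) [IsProbabilityMeasure P]
    (T W : ℕ) (hT : 0 < T) (hW : 0 < W)
    (Δmax : ℝ) (hΔmax : 0 ≤ Δmax)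
    (ξ μhat : Fin T → Fin W → Ω → ℝ)
    (hξ : ∀ t i, Measurable (ξ t i)) (hμhat : ∀ t i, Measurable (μhat t i))
    (N : Fin T → Fin W → Ω → ℕ)
    (hNmeas : ∀ t i, Measurable (N t i))
    (hNrange : ∀ t i ω, 1 ≤ N t i ω ∧ N t i ω ≤ T - 1)
    (Δ : Fin T → Ω → ℝ) (hΔmeas : ∀ t, Measurable (Δ t))
    (hΔ0 : ∀ t ω, 0 ≤ Δ t ω) (hΔ1 : ∀ t ω, Δ t ω ≤ Δmax)
    (hconc : ∀ (t : Fin T) (i : Fin W) (τ : ℕ), 1 ≤ τ → τ ≤ T - 1 →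
      P {ω | N t i ω = τ ∧
            |ξ t i ω - μhat t i ω| ^ 2 > 3 * Real.log T / (2 * τ)} ≤
        P {ω | N t i ω = τ} * ENNReal.ofReal (2 * Real.exp (-3 * Real.log T)))
    (A : Fin T → Set Ω)
    (hA : ∀ t, A t =
      {ω | ∃ i : Fin W,
        |ξ t i ω - μhat t i ω| ^ 2 > 3 * Real.log T / (2 * (N t i ω : ℝ))}) :
    (∫ ω, (∑ t, Set.indicator (A t) (fun _ => (1 : ℝ)) ω * Δ t ω) ∂P) ≤
      2 * Δmax * W := by
  have hT1 : (1:ℝ) ≤ (T:ℝ) := by exact_mod_cast hT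
  have hTpos : (0:ℝ) < (T:ℝ) := by linarith
  -- measurability of A t
  have hAmeas : ∀ t, MeasurableSet (A t) := by
    intro t
    rw [hA]
    have heq : {ω | ∃ i : Fin W,
        |ξ t i ω - μhat t i ω| ^ 2 > 3 * Real.log T / (2 * (N t i ω : ℝ))}
        = ⋃ i : Fin W, {ω | 3 * Real.log T / (2 * (N t i ω : ℝ)) <
            |ξ t i ω - μhat t i ω| ^ 2} := by
      ext ω; simp [gt_iff_lt]
    rw [heq]
    refine MeasurableSet.iUnion fun i => measurableSet_lt ?_ ?_
    · exact (measurable_from_top (f := fun n : ℕ =>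
        3 * Real.log T / (2 * (n : ℝ)))).comp (hNmeas t i)
    · exact (((hξ t i).sub (hμhat t i)).abs).pow_const 2
  -- each summand rewritten as indicator of Δ
  have hind : ∀ (t : Fin T) (ω : Ω),
      Set.indicator (A t) (fun _ => (1 : ℝ)) ω * Δ t ω
        = (A t).indicator (Δ t) ω := by
    intro t ω
    by_cases h : ω ∈ A t <;> simp [Set.indicator, h]
  -- integrability
  have hΔint : ∀ t : Fin T, Integrable (Δ t) P := by
    intro t
    refine (integrable_const Δmax).mono' (hΔmeas t).aestronglyMeasurable ?_
    filter_upwards with ω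
    rw [Real.norm_eq_abs, abs_of_nonneg (hΔ0 t ω)]
    exact hΔ1 t ω
  have hint : ∀ t : Fin T, Integrable ((A t).indicator (Δ t)) P :=
    fun t => (hΔint t).indicator (hAmeas t)
  -- bound on P (A t)
  have hPA : ∀ t : Fin T, (P (A t)).toReal ≤ 2 * W / T := by
    intro t
    have hsub : A t ⊆ ⋃ i : Fin W, ⋃ τ ∈ Finset.Icc 1 (T - 1),
        {ω | N t i ω = τ ∧
          |ξ t i ω - μhat t i ω| ^ 2 > 3 * Real.log T / (2 * τ)} := by
      intro ω hω
      rw [hA] at hω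
      obtain ⟨i, hi⟩ := hω
      refine Set.mem_iUnion.2 ⟨i, ?_⟩
      refine Set.mem_iUnion₂.2 ⟨N t i ω, ?_, rfl, ?_⟩
      · exact Finset.mem_Icc.2 ⟨(hNrange t i ω).1, (hNrange t i ω).2⟩
      · exact hi
    have hNτ : ∀ (i : Fin W), ∑ τ ∈ Finset.Icc 1 (T-1),
        P {ω | N t i ω = τ} ≤ 1 := by
      intro i
      have hmeas : ∀ τ ∈ Finset.Icc 1 (T-1), MeasurableSet {ω | N t i ω = τ} :=
        fun τ _ => (hNmeas t i) (measurableSet_singleton τ)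
      have hdisj : (Finset.Icc 1 (T-1) : Set ℕ).PairwiseDisjoint
          (fun τ => {ω | N t i ω = τ}) := by
        intro a _ b _ hab
        refine Set.disjoint_left.2 fun ω ha hb => hab ?_
        simp only [Set.mem_setOf_eq] at ha hb
        rw [← ha, ← hb]
      calc ∑ τ ∈ Finset.Icc 1 (T-1), P {ω | N t i ω = τ}
          = P (⋃ τ ∈ Finset.Icc 1 (T-1), {ω | N t i ω = τ}) :=
            (measure_biUnion_finset hdisj hmeas).symm
        _ ≤ P Set.univ := measure_mono (Set.subset_univ _)
        _ = 1 := measure_univ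
    have hstep : P (A t) ≤ (W : ℝ≥0∞) *
        ENNReal.ofReal (2 * Real.exp (-3 * Real.log T)) := by
      calc P (A t) ≤ P (⋃ i : Fin W, ⋃ τ ∈ Finset.Icc 1 (T - 1),
            {ω | N t i ω = τ ∧
              |ξ t i ω - μhat t i ω| ^ 2 > 3 * Real.log T / (2 * τ)}) :=
          measure_mono hsub
        _ ≤ ∑ i : Fin W, P (⋃ τ ∈ Finset.Icc 1 (T - 1),
            {ω | N t i ω = τ ∧
              |ξ t i ω - μhat t i ω| ^ 2 > 3 * Real.log T / (2 * τ)}) :=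
          measure_iUnion_fintype_le _ _
        _ ≤ ∑ i : Fin W, ∑ τ ∈ Finset.Icc 1 (T-1),
            P {ω | N t i ω = τ ∧
              |ξ t i ω - μhat t i ω| ^ 2 > 3 * Real.log T / (2 * τ)} :=
          Finset.sum_le_sum fun i _ => measure_biUnion_finset_le _ _
        _ ≤ ∑ i : Fin W, ∑ τ ∈ Finset.Icc 1 (T-1),
            P {ω | N t i ω = τ} * ENNReal.ofReal (2 * Real.exp (-3 * Real.log T)) :=
          Finset.sum_le_sum fun i _ => Finset.sum_le_sum fun τ hτ =>
            hconc t i τ (Finset.mem_Icc.1 hτ).1 (Finset.mem_Icc.1 hτ).2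
        _ = ∑ i : Fin W, (∑ τ ∈ Finset.Icc 1 (T-1), P {ω | N t i ω = τ}) *
            ENNReal.ofReal (2 * Real.exp (-3 * Real.log T)) := by
          simp [Finset.sum_mul]
        _ ≤ ∑ i : Fin W, 1 * ENNReal.ofReal (2 * Real.exp (-3 * Real.log T)) :=
          Finset.sum_le_sum fun i _ =>
            mul_le_mul_left (hNτ i) _
        _ = (W : ℝ≥0∞) * ENNReal.ofReal (2 * Real.exp (-3 * Real.log T)) := by
          simp [mul_comm]
    have hexp : Real.exp (-3 * Real.log T) ≤ 1 / T := by
      have hlog : 0 ≤ Real.log T := Real.log_nonneg hT1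
      have h1 : (-3 : ℝ) * Real.log T ≤ -Real.log T := by linarith
      calc Real.exp (-3 * Real.log T) ≤ Real.exp (-Real.log T) :=
            Real.exp_le_exp.2 h1
        _ = 1 / T := by
          rw [Real.exp_neg, Real.exp_log hTpos, one_div]
    have hle : (W : ℝ≥0∞) * ENNReal.ofReal (2 * Real.exp (-3 * Real.log T))
        ≤ ENNReal.ofReal (2 * W / T) := by
      have : (W : ℝ≥0∞) = ENNReal.ofReal (W : ℝ) := by
        simp
      rw [this, ← ENNReal.ofReal_mul (by positivity)]
      apply ENNReal.ofReal_le_ofReal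
      have h2 : 2 * Real.exp (-3 * Real.log T) ≤ 2 / T := by
        rw [div_eq_mul_one_div]
        nlinarith [Real.exp_pos (-3 * Real.log T)]
      calc (W : ℝ) * (2 * Real.exp (-3 * Real.log T)) ≤ (W : ℝ) * (2 / T) := by
            apply mul_le_mul_of_nonneg_left h2 (by positivity)
        _ = 2 * W / T := by ring
    refine ENNReal.toReal_le_of_le_ofReal (by positivity) ?_
    exact hstep.trans hle
  -- put together
  calc (∫ ω, (∑ t, Set.indicator (A t) (fun _ => (1 : ℝ)) ω * Δ t ω) ∂P)
      = ∑ t, ∫ ω, (A t).indicator (Δ t) ω ∂P := by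
        rw [← integral_finset_sum]
        · congr 1; ext ω; exact Finset.sum_congr rfl fun t _ => hind t ω
        · exact fun t _ => hint t
    _ ≤ ∑ t : Fin T, Δmax * (P (A t)).toReal := by
        refine Finset.sum_le_sum fun t _ => ?_
        have hmono : ∀ ω, (A t).indicator (Δ t) ω
            ≤ (A t).indicator (fun _ => Δmax) ω := by
          intro ω
          by_cases h : ω ∈ A t <;> simp [Set.indicator, h, hΔ1 t ω]
        calc ∫ ω, (A t).indicator (Δ t) ω ∂P
            ≤ ∫ ω, (A t).indicator (fun _ => Δmax) ω ∂P :=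
              integral_mono (hint t)
                ((integrable_const Δmax).indicator (hAmeas t)) hmono
          _ = (P (A t)).toReal • Δmax := integral_indicator_const _ (hAmeas t)
          _ = Δmax * (P (A t)).toReal := by rw [smul_eq_mul, mul_comm]
    _ ≤ ∑ t : Fin T, Δmax * (2 * W / T) := by
        refine Finset.sum_le_sum fun t _ => ?_
        exact mul_le_mul_of_nonneg_left (hPA t) hΔmax
    _ = T * (Δmax * (2 * W / T)) := by simp [Finset.sum_const, mul_comm]
    _ = 2 * Δmax * W := by field_simp
end

section
/- Let (Ω, P) be a probability space, let T and W be positive integers, and let Δ_max ≥ 0. Fix real numbers μ_1, ..., μ_W. For each t ∈ {1,...,T} and i ∈ {1,...,W}, let μ̂_{t,i} be a real-valued random variable and let N_{t,i} be a random variable taking values in {1, ..., T−1}. For each t let Δ_t be a random variable with 0 ≤ Δ_t ≤ Δ_max. Assume that for all t, i and all τ ∈ {1,...,T−1}: P( N_{t,i} = τ and |μ_i − μ̂_{t,i}|² > 3·log T/(2τ) ) ≤ P(N_{t,i} = τ)·2·exp(−3·log T). Define the event B_t = { ω : there exists i ∈ {1,...,W} with |μ_i − μ̂_{t,i}(ω)|²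 > 3·log T/(2·N_{t,i}(ω)) }. Then E[ ∑_{t=1}^T 1_{B_t}·Δ_t ] ≤ 2·Δ_max·W. -/
open MeasureTheory ProbabilityTheory

/-- **Lemma 3**: the contribution of rounds where the empirical-mean deviation
event `B t` occurs to the cumulative regret is at most `2·Δmax·W`. -/
theorem regret_contribution_event_B
    {Ω : Type*} [MeasurableSpace Ω] (P : Measure Ω) [IsProbabilityMeasure P]
    (T W : ℕ) (hT : 0 < T) (hW : 0 < W)
    (Δmax : ℝ) (hΔmax : 0 ≤ Δmax)
    (μ : Fin W → ℝ)
    (μhat : Fin T → Fin W → Ω → ℝ) (hμhat : ∀ t i, Measurable (μhat t i))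
    (N : Fin T → Fin W → Ω → ℕ)
    (hNmeas : ∀ t i, Measurable (N t i))
    (hNrange : ∀ t i ω, 1 ≤ N t i ω ∧ N t i ω ≤ T - 1)
    (Δ : Fin T → Ω → ℝ) (hΔmeas : ∀ t, Measurable (Δ t))
    (hΔ0 : ∀ t ω, 0 ≤ Δ t ω) (hΔ1 : ∀ t ω, Δ t ω ≤ Δmax)
    (hconc : ∀ (t : Fin T) (i : Fin W) (τ : ℕ), 1 ≤ τ → τ ≤ T - 1 →
      P {ω | N t i ω = τ ∧
            |μ i - μhat t i ω| ^ 2 > 3 * Real.log T / (2 * τ)} ≤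
        P {ω | N t i ω = τ} * ENNReal.ofReal (2 * Real.exp (-3 * Real.log T)))
    (B : Fin T → Set Ω)
    (hB : ∀ t, B t =
      {ω | ∃ i : Fin W,
        |μ i - μhat t i ω| ^ 2 > 3 * Real.log T / (2 * (N t i ω : ℝ))}) :
    (∫ ω, (∑ t, Set.indicator (B t) (fun _ => (1 : ℝ)) ω * Δ t ω) ∂P) ≤
      2 * Δmax * W := by
  have hT1 : (1:ℝ) ≤ (T:ℝ) := by exact_mod_cast hT
  set c : ℝ := 2 * Real.exp (-3 * Real.log T) with hc
  have hc0 : 0 ≤ c := by positivity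
  -- measurability of B t
  have hAmeas : ∀ (t : Fin T) (i : Fin W),
      MeasurableSet {ω | |μ i - μhat t i ω| ^ 2 > 3 * Real.log T / (2 * (N t i ω : ℝ))} := by
    intro t i
    have h1 : Measurable fun ω => |μ i - μhat t i ω| ^ 2 :=
      ((measurable_const.sub (hμhat t i)).abs).pow_const 2
    have h2 : Measurable fun ω => 3 * Real.log T / (2 * (N t i ω : ℝ)) := by
      have : Measurable fun ω => ((N t i ω : ℕ) : ℝ) :=
        measurable_from_top.comp (hNmeas t i)
      exact measurable_const.div (measurable_const.mul this)
    exact measurableSet_lt h2 h1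
  have hBmeas : ∀ t, MeasurableSet (B t) := by
    intro t
    rw [hB]
    have heq : {ω | ∃ i : Fin W,
        |μ i - μhat t i ω| ^ 2 > 3 * Real.log T / (2 * (N t i ω : ℝ))} =
        ⋃ i : Fin W, {ω | |μ i - μhat t i ω| ^ 2 > 3 * Real.log T / (2 * (N t i ω : ℝ))} := by
      ext ω; simp
    rw [heq]
    exact MeasurableSet.iUnion fun i => hAmeas t i
  -- per-arm bound
  have hPA : ∀ (t : Fin T) (i : Fin W),
      P {ω | |μ i - μhat t i ω| ^ 2 > 3 * Real.log T / (2 * (N t i ω : ℝ))} ≤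
        ENNReal.ofReal c := by
    intro t i
    have hsub : {ω | |μ i - μhat t i ω| ^ 2 > 3 * Real.log T / (2 * (N t i ω : ℝ))} ⊆
        ⋃ τ ∈ Finset.Icc 1 (T-1), {ω | N t i ω = τ ∧
          |μ i - μhat t i ω| ^ 2 > 3 * Real.log T / (2 * (τ:ℝ))} := by
      intro ω hω
      simp only [Set.mem_iUnion, Finset.mem_Icc]
      exact ⟨N t i ω, ⟨(hNrange t i ω).1, (hNrange t i ω).2⟩, rfl, hω⟩
    calc P _ ≤ P (⋃ τ ∈ Finset.Icc 1 (T-1), {ω | N t i ω = τ ∧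
          |μ i - μhat t i ω| ^ 2 > 3 * Real.log T / (2 * (τ:ℝ))}) := measure_mono hsub
      _ ≤ ∑ τ ∈ Finset.Icc 1 (T-1), P {ω | N t i ω = τ ∧
          |μ i - μhat t i ω| ^ 2 > 3 * Real.log T / (2 * (τ:ℝ))} :=
            measure_biUnion_finset_le _ _
      _ ≤ ∑ τ ∈ Finset.Icc 1 (T-1), P {ω | N t i ω = τ} * ENNReal.ofReal c := by
            refine Finset.sum_le_sum fun τ hτ => ?_
            rw [Finset.mem_Icc] at hτ
            exact hconc t i τ hτ.1 hτ.2
      _ = (∑ τ ∈ Finset.Icc 1 (T-1), P {ω | N t i ω = τ}) * ENNReal.ofReal c := by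
            rw [Finset.sum_mul]
      _ ≤ 1 * ENNReal.ofReal c := by
            refine mul_le_mul_left ?_ _
            have hdisj : ((Finset.Icc 1 (T-1) : Finset ℕ) : Set ℕ).PairwiseDisjoint
                (fun τ => {ω | N t i ω = τ}) := by
              intro a _ b _ hab
              refine Set.disjoint_left.mpr fun ω ha hb => hab ?_
              simp only [Set.mem_setOf_eq] at ha hb
              rw [← ha, ← hb]
            rw [← measure_biUnion_finset hdisj (fun τ _ => (hNmeas t i) (measurableSet_singleton τ))]
            exact prob_le_one
      _ = ENNReal.ofReal c := one_mul _
  -- per-round bound on P (B t)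
  have hPB : ∀ t, (P (B t)).toReal ≤ W * c := by
    intro t
    have h1 : P (B t) ≤ ENNReal.ofReal (W * c) := by
      rw [hB]
      have heq : {ω | ∃ i : Fin W,
          |μ i - μhat t i ω| ^ 2 > 3 * Real.log T / (2 * (N t i ω : ℝ))} =
          ⋃ i : Fin W, {ω | |μ i - μhat t i ω| ^ 2 > 3 * Real.log T / (2 * (N t i ω : ℝ))} := by
        ext ω; simp
      rw [heq]
      calc P _ ≤ ∑ i : Fin W, P {ω | |μ i - μhat t i ω| ^ 2 >
            3 * Real.log T / (2 * (N t i ω : ℝ))} := measure_iUnion_fintype_le _ _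
        _ ≤ ∑ _i : Fin W, ENNReal.ofReal c := Finset.sum_le_sum fun i _ => hPA t i
        _ = ENNReal.ofReal (W * c) := by
            rw [Finset.sum_const, Finset.card_univ, Fintype.card_fin, nsmul_eq_mul,
              ENNReal.ofReal_mul (Nat.cast_nonneg W), ENNReal.ofReal_natCast]
    calc (P (B t)).toReal ≤ (ENNReal.ofReal (W * c)).toReal :=
          ENNReal.toReal_mono ENNReal.ofReal_ne_top h1
      _ = W * c := ENNReal.toReal_ofReal (by positivity)
  -- integrability
  have hInd : ∀ t, (fun ω => Set.indicator (B t) (fun _ => (1:ℝ)) ω * Δ t ω)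
      = Set.indicator (B t) (Δ t) := by
    intro t; ext ω
    by_cases h : ω ∈ B t <;> simp [Set.indicator_of_mem, Set.indicator_of_notMem, h]
  have hΔint : ∀ t, Integrable (Δ t) P := by
    intro t
    refine Integrable.mono' (integrable_const Δmax) (hΔmeas t).aestronglyMeasurable ?_
    filter_upwards with ω
    rw [Real.norm_eq_abs, abs_of_nonneg (hΔ0 t ω)]
    exact hΔ1 t ω
  have hint : ∀ t, Integrable (Set.indicator (B t) (Δ t)) P := fun t =>
    (hΔint t).indicator (hBmeas t)
  -- main bound
  have hterm : ∀ t, (∫ ω, Set.indicator (B t) (Δ t) ω ∂P) ≤ Δmax * (P (B t)).toReal := by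
    intro t
    have hmono : ∫ ω, Set.indicator (B t) (Δ t) ω ∂P ≤
        ∫ ω, Set.indicator (B t) (fun _ => Δmax) ω ∂P := by
      refine integral_mono (hint t) ((integrable_const Δmax).indicator (hBmeas t)) ?_
      intro ω
      by_cases h : ω ∈ B t <;>
        simp [Set.indicator_of_mem, Set.indicator_of_notMem, h, hΔ1 t ω]
    calc _ ≤ _ := hmono
      _ = (P (B t)).toReal • Δmax := integral_indicator_const _ (hBmeas t)
      _ = Δmax * (P (B t)).toReal := by rw [smul_eq_mul]; ring
  have hTc : (T:ℝ) * c ≤ 2 := by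
    have hexp : Real.exp (-3 * Real.log T) = ((T:ℝ)^3)⁻¹ := by
      rw [neg_mul, Real.exp_neg]
      congr 1
      rw [show (3:ℝ) * Real.log T = ((3:ℕ):ℝ) * Real.log T by norm_num,
        Real.exp_nat_mul, Real.exp_log (by linarith)]
    have heq2 : (T:ℝ) * (2 * ((T:ℝ)^3)⁻¹) = 2 / (T:ℝ)^2 := by
      field_simp
    rw [hc, hexp, heq2, div_le_iff₀ (by positivity)]
    nlinarith [sq_nonneg ((T:ℝ) - 1)]
  calc (∫ ω, (∑ t, Set.indicator (B t) (fun _ => (1 : ℝ)) ω * Δ t ω) ∂P)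
      = ∑ t, ∫ ω, Set.indicator (B t) (Δ t) ω ∂P := by
        simp_rw [← hInd]
        exact integral_finset_sum _ (fun t _ => by rw [hInd]; exact hint t)
    _ ≤ ∑ t, Δmax * (P (B t)).toReal := Finset.sum_le_sum fun t _ => hterm t
    _ ≤ ∑ _t : Fin T, Δmax * (W * c) := by
        refine Finset.sum_le_sum fun t _ => ?_
        exact mul_le_mul_of_nonneg_left (hPB t) hΔmax
    _ = (T:ℝ) * (Δmax * (W * c)) := by
        rw [Finset.sum_const, Finset.card_univ, Fintype.card_fin, nsmul_eq_mul]
    _ ≤ 2 * Δmax * W := by nlinarith [mul_nonneg hΔmax (Nat.cast_nonneg W : (0:ℝ) ≤ W)]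
end
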